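/- arXiv:2207.10325 — 2 statements merged into one kernel-verified Lean document; each statement's English description precedes it below -/
import Mathlib

section
/- Characterization (i ⇒ ii): if u* is a dual optimal solution with r_k(u*) = R_k, then there exists a minimum-cost integral solution S of the restricted problem (containing k) such that r_j(u*) = 0 for every j ∈ S with j ≠ k. -/
/-!
For a dual feasible `u`, the cost of a feasible `x` is `w(u) + Σ x_j r_j(u) + u_q·(Ax - b)`,
a sum of `w(u)` and two nonnegative terms. Idealness applied to the cost `c` with a large
penalty subtracted at `k` yields an integral solution through `k` of cost `z*_{|k}`. If `u`
is optimal and `r_k(u) = z*_{|k} - z*`, the term `x_k r_k(u)` already accounts for the whole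
gap `z*_{|k} - w(u)`, so every other `j` in the support has `r_j(u) = 0`.
-/

open Matrix

/-- Primal feasibility for the LP with partition constraints:
Ax ≥ b, Σ_{j : grp j = i} x_j = 1 for each group i, x ≥ 0. -/
def Feas {m n E : ℕ} (A : Matrix (Fin m) (Fin E) ℝ) (b : Fin m → ℝ)
    (grp : Fin E → Fin n) (x : Fin E → ℝ) : Prop :=
  b ≤ A.mulVec x ∧ (∀ i : Fin n, (∑ j : Fin E, if grp j = i then x j else 0) = 1) ∧ 0 ≤ x

/-- A 0/1 (integral) vector. -/
def Integral {E : ℕ} (x : Fin E → ℝ) : Prop := ∀ j, x j = 0 ∨ x j = 1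

/-- Dual feasibility: u_q ≥ 0 and u_{grp j} + Σ_q A_{qj} u_q ≤ c_j for each index j. -/
def DualFeas {m n E : ℕ} (A : Matrix (Fin m) (Fin E) ℝ) (c : Fin E → ℝ)
    (grp : Fin E → Fin n) (uq : Fin m → ℝ) (uv : Fin n → ℝ) : Prop :=
  0 ≤ uq ∧ ∀ j : Fin E, uv (grp j) + (∑ q : Fin m, A q j * uq q) ≤ c j

/-- Dual objective w(u) = b·u_q + Σ_i u_i. -/
def dualObj {m n : ℕ} (b : Fin m → ℝ) (uq : Fin m → ℝ) (uv : Fin n → ℝ) : ℝ :=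
  b ⬝ᵥ uq + ∑ i : Fin n, uv i

/-- Reduced cost r_j(u) = c_j − u_{grp j} − Σ_q A_{qj} u_q. -/
def rc {m n E : ℕ} (A : Matrix (Fin m) (Fin E) ℝ) (c : Fin E → ℝ)
    (grp : Fin E → Fin n) (uq : Fin m → ℝ) (uv : Fin n → ℝ) (j : Fin E) : ℝ :=
  c j - uv (grp j) - ∑ q : Fin m, A q j * uq q

section Duality

variable {m n E : ℕ} (A : Matrix (Fin m) (Fin E) ℝ) (b : Fin m → ℝ) (c : Fin E → ℝ)
  (grp : Fin E → Fin n) (uq : Fin m → ℝ) (uv : Fin n → ℝ)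

variable {A c grp uq uv} in
theorem rc_nonneg (hu : DualFeas A c grp uq uv) (j : Fin E) : 0 ≤ rc A c grp uq uv j := by
  have := hu.2 j
  unfold rc
  linarith

theorem sum_mul_comp_eq_sum_of_partition {x : Fin E → ℝ}
    (hx : ∀ i : Fin n, (∑ j : Fin E, if grp j = i then x j else 0) = 1) :
    ∑ j : Fin E, x j * uv (grp j) = ∑ i : Fin n, uv i := by
  calc ∑ j : Fin E, x j * uv (grp j)
      = ∑ j : Fin E, ∑ i : Fin n, if grp j = i then uv i * x j else 0 := by
        refine Finset.sum_congr rfl fun j _ => ?_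
        rw [Finset.sum_ite_eq, if_pos (Finset.mem_univ _), mul_comm]
    _ = ∑ i : Fin n, uv i * ∑ j : Fin E, if grp j = i then x j else 0 := by
        rw [Finset.sum_comm]
        simp only [Finset.mul_sum, mul_ite, mul_zero]
    _ = ∑ i : Fin n, uv i := by simp only [hx, mul_one]

theorem dotProduct_eq_dualObj_add {x : Fin E → ℝ}
    (hx : ∀ i : Fin n, (∑ j : Fin E, if grp j = i then x j else 0) = 1) :
    c ⬝ᵥ x = dualObj b uq uv + ∑ j : Fin E, x j * rc A c grp uq uv j
      + uq ⬝ᵥ (A *ᵥ x - b) := by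
  have hA : uq ⬝ᵥ (A *ᵥ x) = ∑ j : Fin E, x j * ∑ q : Fin m, A q j * uq q := by
    rw [dotProduct_mulVec, dotProduct_comm]
    simp only [dotProduct, vecMul, mul_comm (A _ _)]
  rw [dotProduct_sub, hA, dualObj, dotProduct_comm b,
    ← sum_mul_comp_eq_sum_of_partition grp uv hx, dotProduct]
  have hsplit : ∀ j, c j * x j = x j * uv (grp j) + x j * rc A c grp uq uv j
      + x j * ∑ q : Fin m, A q j * uq q := fun j => by unfold rc; ring
  simp only [hsplit, Finset.sum_add_distrib]
  ring

variable {A b c grp uq uv}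

theorem slack_nonneg {x : Fin E → ℝ} (hx : Feas A b grp x) (hu : DualFeas A c grp uq uv) :
    0 ≤ ∑ j : Fin E, x j * rc A c grp uq uv j ∧ 0 ≤ uq ⬝ᵥ (A *ᵥ x - b) :=
  ⟨Finset.sum_nonneg fun j _ => mul_nonneg (hx.2.2 j) (rc_nonneg hu j),
    dotProduct_nonneg_of_nonneg hu.1 (sub_nonneg.2 hx.1)⟩

theorem dualObj_le_dotProduct {x : Fin E → ℝ} (hx : Feas A b grp x)
    (hu : DualFeas A c grp uq uv) : dualObj b uq uv ≤ c ⬝ᵥ x := by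
  rw [dotProduct_eq_dualObj_add A b c grp uq uv hx.2.1]
  linarith [slack_nonneg hx hu]

theorem rc_eq_zero_of_dotProduct_eq_dualObj_add_rc {x : Fin E → ℝ} {k j : Fin E}
    (hx : Feas A b grp x) (hu : DualFeas A c grp uq uv) (hxk : x k = 1)
    (hcost : c ⬝ᵥ x = dualObj b uq uv + rc A c grp uq uv k) (hjk : j ≠ k) (hxj : x j = 1) :
    rc A c grp uq uv j = 0 := by
  have hnonneg : ∀ i ∈ Finset.univ.erase k, 0 ≤ x i * rc A c grp uq uv i :=
    fun i _ => mul_nonneg (hx.2.2 i) (rc_nonneg hu i)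
  have hrest : ∑ i ∈ Finset.univ.erase k, x i * rc A c grp uq uv i = 0 := by
    have hsum := Finset.sum_erase_add _ (fun i => x i * rc A c grp uq uv i) (Finset.mem_univ k)
    have hgap := dotProduct_eq_dualObj_add A b c grp uq uv hx.2.1
    rw [hxk, one_mul] at hsum
    linarith [Finset.sum_nonneg hnonneg, (slack_nonneg hx hu).2]
  have hj := (Finset.sum_eq_zero_iff_of_nonneg hnonneg).1 hrest j
    (Finset.mem_erase.2 ⟨hjk, Finset.mem_univ j⟩)
  rwa [hxj, one_mul] at hj

end Duality

theorem exists_integral_of_isLeast_restricted {m n E : ℕ} {A : Matrix (Fin m) (Fin E) ℝ}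
    {b : Fin m → ℝ} {c : Fin E → ℝ} {grp : Fin E → Fin n} {k : Fin E} {zk L : ℝ}
    (hL : ∀ x, Feas A b grp x → L ≤ c ⬝ᵥ x)
    (hzk : IsLeast {z | ∃ x : Fin E → ℝ, Feas A b grp x ∧ x k = 1 ∧ c ⬝ᵥ x = z} zk)
    (hideal : ∀ c' : Fin E → ℝ, (∃ x0 : Fin E → ℝ, Feas A b grp x0) →
      ∃ xt : Fin E → ℝ, Feas A b grp xt ∧ Integral xt ∧
        ∀ y : Fin E → ℝ, Feas A b grp y → c' ⬝ᵥ xt ≤ c' ⬝ᵥ y) :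
    ∃ x : Fin E → ℝ, Feas A b grp x ∧ Integral x ∧ x k = 1 ∧ c ⬝ᵥ x = zk := by
  obtain ⟨⟨xk, hxk, hxkk, hxkc⟩, hzk_le⟩ := hzk
  -- a penalty exceeding `zk - L` makes any solution avoiding `k` costlier than `xk`
  set M := zk - L + 1
  have hpen : ∀ y : Fin E → ℝ, (c - M • Pi.single k 1) ⬝ᵥ y = c ⬝ᵥ y - M * y k := fun y => by
    rw [sub_dotProduct, smul_dotProduct, single_dotProduct, one_mul, smul_eq_mul]
  obtain ⟨x, hx, hxI, hxopt⟩ := hideal (c - M • Pi.single k 1) ⟨xk, hxk⟩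
  have hcmp := hxopt xk hxk
  rw [hpen, hpen, hxkk, hxkc] at hcmp
  have hxk1 : x k = 1 := (hxI k).resolve_left fun h0 => by
    rw [h0] at hcmp
    linarith [hL x hx]
  rw [hxk1] at hcmp
  exact ⟨x, hx, hxI, hxk1, le_antisymm (by linarith) (hzk_le ⟨x, hx, hxk1, rfl⟩)⟩

theorem stmt6_general {m n E : ℕ} (A : Matrix (Fin m) (Fin E) ℝ) (b : Fin m → ℝ)
    (c : Fin E → ℝ) (grp : Fin E → Fin n) (k : Fin E) (zstar zk : ℝ)
    (hzk : IsLeast {z | ∃ x : Fin E → ℝ, Feas A b grp x ∧ x k = 1 ∧ c ⬝ᵥ x = z} zk)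
    (hideal : ∀ c' : Fin E → ℝ, (∃ x0 : Fin E → ℝ, Feas A b grp x0) →
      ∃ xt : Fin E → ℝ, Feas A b grp xt ∧ Integral xt ∧
        ∀ y : Fin E → ℝ, Feas A b grp y → c' ⬝ᵥ xt ≤ c' ⬝ᵥ y)
    (uq : Fin m → ℝ) (uv : Fin n → ℝ)
    (hu : DualFeas A c grp uq uv) (hopt : dualObj b uq uv = zstar)
    (hrk : rc A c grp uq uv k = zk - zstar) :
    ∃ x : Fin E → ℝ, Feas A b grp x ∧ Integral x ∧ x k = 1 ∧ c ⬝ᵥ x = zk ∧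
      ∀ j : Fin E, j ≠ k → x j = 1 → rc A c grp uq uv j = 0 := by
  obtain ⟨x, hx, hxI, hxk, hxc⟩ :=
    exists_integral_of_isLeast_restricted (fun _ hx => dualObj_le_dotProduct hx hu) hzk hideal
  refine ⟨x, hx, hxI, hxk, hxc, fun j hjk hxj => ?_⟩
  refine rc_eq_zero_of_dotProduct_eq_dualObj_add_rc hx hu hxk ?_ hjk hxj
  rw [hxc, hrk, hopt]
  ring

/-- Characterization (i ⇒ ii): if u* is dual optimal with r_k(u*) = R_k, then there is a
minimum-cost integral solution of the restricted problem (containing k) on which all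
reduced costs other than that of k vanish. -/
theorem stmt6 {m n E : ℕ} (A : Matrix (Fin m) (Fin E) ℝ) (b : Fin m → ℝ)
    (c : Fin E → ℝ) (grp : Fin E → Fin n) (k : Fin E) (zstar zk : ℝ)
    (hz : IsLeast {z | ∃ x : Fin E → ℝ, Feas A b grp x ∧ c ⬝ᵥ x = z} zstar)
    (hzk : IsLeast {z | ∃ x : Fin E → ℝ, Feas A b grp x ∧ x k = 1 ∧ c ⬝ᵥ x = z} zk)
    (hideal : ∀ c' : Fin E → ℝ, (∃ x0 : Fin E → ℝ, Feas A b grp x0) →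
      ∃ xt : Fin E → ℝ, Feas A b grp xt ∧ Integral xt ∧
        ∀ y : Fin E → ℝ, Feas A b grp y → c' ⬝ᵥ xt ≤ c' ⬝ᵥ y)
    (uq : Fin m → ℝ) (uv : Fin n → ℝ)
    (hu : DualFeas A c grp uq uv) (hopt : dualObj b uq uv = zstar)
    (hrk : rc A c grp uq uv k = zk - zstar) :
    ∃ x : Fin E → ℝ, Feas A b grp x ∧ Integral x ∧ x k = 1 ∧ c ⬝ᵥ x = zk ∧
      ∀ j : Fin E, j ≠ k → x j = 1 → rc A c grp uq uv j = 0 :=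
  stmt6_general A b c grp k zstar zk hzk hideal uq uv hu hopt hrk
end

section
/- Optimal value of the merged-objective dual (D_I): let I be a set of pairwise incompatible indices each belonging to a feasible integral solution, in an ideal LP formulation with partition constraints. The optimum of max over dual feasible u of [dual objective w(u) + (1/|I|)·Σ_{kl∈I} r_{kl}(u)] equals z* + (1/|I|)·Σ_{kl∈I} R_{kl}. -/
open Matrix

/-!
Weak duality gives `w(u) + r_j(u) ≤ z* + R_j` for `j ∈ I` and `w(u) ≤ z*`; averaging yields the
upper bound. For attainment, consider the merged primal `min c ⬝ᵥ x` over feasible `x` with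
`x_j ≥ 1/|I|` for `j ∈ I`. Its LP dual is `max w(u) + (1/|I|) Σ_{j ∈ I} s_j` subject to
`0 ≤ s_j ≤ r_j(u)`, so it suffices to bound the merged primal below by `z* + (1/|I|) Σ_{j ∈ I} R_j`.
By ideality the cost `c - Σ_{j ∈ I} R_j e_j` has an integral minimiser; by incompatibility it
takes the value 1 on at most one index of `I`, so its cost is at least `z*`. Strong duality
itself is derived from Farkas' lemma, proved by Fourier–Motzkin elimination.
-/

open Finset

lemma exists_forall_le_and_forall_le_of_finite {α β γ : Type*} [Finite α] [Finite β]
    [LinearOrder γ] [Nonempty γ] {L : α → γ} {U : β → γ} (h : ∀ a b, L a ≤ U b) :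
    ∃ t, (∀ a, L a ≤ t) ∧ ∀ b, t ≤ U b := by
  rcases isEmpty_or_nonempty α with hα | hα
  · obtain ⟨t, ht⟩ := Finite.bddBelow_range U
    exact ⟨t, isEmptyElim, fun b => ht ⟨b, rfl⟩⟩
  · obtain ⟨a₀, ha₀⟩ := Finite.exists_max L
    exact ⟨L a₀, ha₀, h a₀⟩

section FourierMotzkin

variable {ι : Type*} [DecidableEq ι]

abbrev FMIndex (α : ι → ℝ) : Type _ := {i // α i = 0} ⊕ ({i // 0 < α i} × {i // α i < 0})

/-- The nonnegative combinations of rows that cancel the column `α`: the rows with `α i = 0`, and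
`α i • row k - α k • row i` for every pair with `α i > 0 > α k`. -/
def fmMatrix (α : ι → ℝ) : Matrix (FMIndex α) ι ℝ :=
  Matrix.of fun
    | .inl i => Pi.single i.1 1
    | .inr (i, k) => α i • Pi.single k.1 1 - α k • Pi.single i.1 1

variable {α : ι → ℝ}

lemma fmMatrix_nonneg (r : FMIndex α) (l : ι) : 0 ≤ fmMatrix α r l := by
  rcases r with i | ⟨⟨i, hi⟩, ⟨k, hk⟩⟩
  · simp only [fmMatrix, of_apply, Pi.single_apply]
    split_ifs <;> norm_num
  · simp only [fmMatrix, of_apply, Pi.sub_apply, Pi.smul_apply, Pi.single_apply, smul_eq_mul]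
    split_ifs <;> nlinarith

variable [Fintype ι]

@[simp]
lemma fmMatrix_mulVec_inl (v : ι → ℝ) (i : {i // α i = 0}) :
    (fmMatrix α *ᵥ v) (.inl i) = v i := by
  simp [fmMatrix, mulVec]

@[simp]
lemma fmMatrix_mulVec_inr (v : ι → ℝ) (i : {i // 0 < α i}) (k : {i // α i < 0}) :
    (fmMatrix α *ᵥ v) (.inr (i, k)) = α i * v k - α k * v i := by
  change (α i • Pi.single k.1 (1 : ℝ) - α k • Pi.single i.1 1) ⬝ᵥ v = _
  simp [sub_dotProduct]

lemma fmMatrix_mulVec_self : fmMatrix α *ᵥ α = 0 := by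
  funext r
  rcases r with ⟨i, hi⟩ | ⟨i, k⟩
  · simpa using hi
  · simp [mul_comm]

lemma exists_le_add_smul_of_fmMatrix_mulVec_le {d v : ι → ℝ}
    (h : fmMatrix α *ᵥ d ≤ fmMatrix α *ᵥ v) : ∃ t : ℝ, d ≤ v + t • α := by
  obtain ⟨t, hlow, hupp⟩ := exists_forall_le_and_forall_le_of_finite
    (L := fun i : {i // 0 < α i} => (d i - v i) / α i)
    (U := fun k : {k // α k < 0} => (d k - v k) / α k) fun i k => by
      have hik := h (.inr (i, k))
      simp only [fmMatrix_mulVec_inr] at hik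
      rw [le_div_iff_of_neg k.2, div_mul_eq_mul_div, le_div_iff₀ i.2]
      linear_combination hik
  refine ⟨t, fun i => ?_⟩
  simp only [Pi.add_apply, Pi.smul_apply, smul_eq_mul]
  rcases lt_trichotomy (α i) 0 with hi | hi | hi
  · have := hupp ⟨i, hi⟩
    rw [le_div_iff_of_neg hi] at this
    linarith
  · simpa [hi] using h (.inl ⟨i, hi⟩)
  · have := hlow ⟨i, hi⟩
    rw [div_le_iff₀ hi] at this
    linarith

end FourierMotzkin

def IsFarkasCertificate {ι κ : Type*} [Fintype ι] (a : Matrix ι κ ℝ) (d y : ι → ℝ) : Prop :=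
  0 ≤ y ∧ y ᵥ* a = 0 ∧ 0 < y ⬝ᵥ d

lemma IsFarkasCertificate.of_mul {η ι κ : Type*} [Fintype η] [Fintype ι] {C : Matrix η ι ℝ}
    (hC : ∀ r i, 0 ≤ C r i) {a : Matrix ι κ ℝ} {d : ι → ℝ} {y : η → ℝ}
    (hy : IsFarkasCertificate (C * a) (C *ᵥ d) y) : IsFarkasCertificate a d (y ᵥ* C) :=
  ⟨fun i => sum_nonneg fun r _ => mul_nonneg (hy.1 r) (hC r i),
    by rw [vecMul_vecMul, hy.2.1], by rw [← dotProduct_mulVec]; exact hy.2.2⟩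

lemma exists_isFarkasCertificate_of_support_subset {κ : Type*} [Fintype κ] (s : Finset κ) :
    ∀ {ι : Type*} [Fintype ι] (a : Matrix ι κ ℝ) (d : ι → ℝ), (∀ i, ∀ j ∉ s, a i j = 0) →
      (¬∃ x, d ≤ a *ᵥ x) → ∃ y, IsFarkasCertificate a d y := by
  classical
  induction s using Finset.induction_on with
  | empty =>
    intro ι _ a d ha hinf
    have ha0 : a = 0 := by ext i j; exact ha i j (notMem_empty j)
    obtain ⟨i, hi⟩ : ∃ i, 0 < d i := by
      by_contra! hd
      exact hinf ⟨0, fun i => by simpa [ha0] using hd i⟩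
    exact ⟨Pi.single i 1, Pi.single_nonneg.2 zero_le_one, by simp [ha0], by simpa⟩
  | insert j s hj ih =>
    intro ι _ a d ha hinf
    set C := fmMatrix (a.col j)
    have hsupp : ∀ r l, l ∉ s → (C * a) r l = 0 := by
      intro r l hl
      by_cases hlj : l = j
      · subst hlj
        exact congrFun fmMatrix_mulVec_self r
      · rw [mul_apply]
        exact sum_eq_zero fun i _ => by rw [ha i l (by simp [hlj, hl]), mul_zero]
    have hinf' : ¬∃ x, C *ᵥ d ≤ (C * a) *ᵥ x := by
      rintro ⟨x, hx⟩
      rw [← mulVec_mulVec] at hx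
      obtain ⟨t, ht⟩ := exists_le_add_smul_of_fmMatrix_mulVec_le hx
      exact hinf ⟨x + t • Pi.single j 1, by rwa [mulVec_add, mulVec_smul, mulVec_single_one]⟩
    obtain ⟨y, hy⟩ := ih (C * a) (C *ᵥ d) hsupp hinf'
    exact ⟨_, hy.of_mul fmMatrix_nonneg⟩

theorem exists_isFarkasCertificate {ι κ : Type*} [Fintype ι] [Fintype κ] (a : Matrix ι κ ℝ)
    (d : ι → ℝ) (h : ¬∃ x, d ≤ a *ᵥ x) : ∃ y, IsFarkasCertificate a d y :=
  exists_isFarkasCertificate_of_support_subset univ a d (by simp) h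

lemma exists_primal_certificate_of_not_exists_dual_ge {κ ι ε : Type*} [Fintype κ] [Fintype ι]
    [Fintype ε] {A : Matrix κ ε ℝ} {b : κ → ℝ} {G : Matrix ι ε ℝ} {h : ι → ℝ} {c : ε → ℝ} {V : ℝ}
    (hno : ¬∃ p q, 0 ≤ p ∧ p ᵥ* A + q ᵥ* G ≤ c ∧ V ≤ b ⬝ᵥ p + h ⬝ᵥ q) :
    ∃ x μ, 0 ≤ x ∧ 0 ≤ μ ∧ μ • b ≤ A *ᵥ x ∧ G *ᵥ x = μ • h ∧ c ⬝ᵥ x < μ * V := by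
  classical
  -- The dual constraints as one system `d ≤ M *ᵥ (p, q)`; `x` and `μ` are the multipliers of
  -- its rows `p ᵥ* A + q ᵥ* G ≤ c` and `V ≤ b ⬝ᵥ p + h ⬝ᵥ q` in a Farkas certificate.
  let M : Matrix (κ ⊕ ε ⊕ Unit) (κ ⊕ ι) ℝ := Matrix.of fun
    | .inl k => Pi.single (.inl k) 1
    | .inr (.inl j) => -Sum.elim (fun k => A k j) (fun i => G i j)
    | .inr (.inr _) => Sum.elim b h
  let d : κ ⊕ ε ⊕ Unit → ℝ := Sum.elim 0 (Sum.elim (-c) fun _ => V)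
  have hinf : ¬∃ u, d ≤ M *ᵥ u := by
    rintro ⟨u, hu⟩
    refine hno ⟨u ∘ .inl, u ∘ .inr, fun k => by simpa [M, d, mulVec] using hu (.inl k),
      fun j => ?_, ?_⟩
    · simpa [M, d, mulVec, dotProduct, vecMul, Fintype.sum_sum_type, mul_comm]
        using hu (.inr (.inl j))
    · simpa [M, d, mulVec, dotProduct, Fintype.sum_sum_type] using hu (.inr (.inr ()))
  obtain ⟨y, hy0, hyM, hyd⟩ := exists_isFarkasCertificate M d hinf
  set x : ε → ℝ := fun j => y (.inr (.inl j))
  set μ := y (.inr (.inr PUnit.unit))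
  refine ⟨x, μ, fun j => hy0 _, hy0 _, fun k => ?_, funext fun i => ?_, ?_⟩
  · have hcol : (y ᵥ* M) (.inl k) = y (.inl k) - (A *ᵥ x) k + μ * b k := by
      simp [M, vecMul, dotProduct, mulVec, Fintype.sum_sum_type, Pi.single_apply, x, μ, mul_comm,
        sub_eq_add_neg, add_assoc]
    have hyk : (0 : ℝ) ≤ y (.inl k) := hy0 _
    rw [hyM, Pi.zero_apply] at hcol
    simp only [Pi.smul_apply, smul_eq_mul]
    linarith
  · have hcol : (y ᵥ* M) (.inr i) = -(G *ᵥ x) i + μ * h i := by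
      simp [M, vecMul, dotProduct, mulVec, Fintype.sum_sum_type, x, μ, mul_comm]
    rw [hyM, Pi.zero_apply] at hcol
    simp only [Pi.smul_apply, smul_eq_mul]
    linarith
  · simpa [d, dotProduct, Fintype.sum_sum_type, mul_comm] using hyd

theorem exists_dual_ge_of_forall_le {κ ι ε : Type*} [Fintype κ] [Fintype ι] [Fintype ε]
    (A : Matrix κ ε ℝ) (b : κ → ℝ) (G : Matrix ι ε ℝ) (h : ι → ℝ) (c : ε → ℝ) (V : ℝ)
    (hV : ∀ x, b ≤ A *ᵥ x → G *ᵥ x = h → 0 ≤ x → V ≤ c ⬝ᵥ x)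
    (hrec : ∀ x, 0 ≤ A *ᵥ x → G *ᵥ x = 0 → 0 ≤ x → 0 ≤ c ⬝ᵥ x) :
    ∃ p q, 0 ≤ p ∧ p ᵥ* A + q ᵥ* G ≤ c ∧ V ≤ b ⬝ᵥ p + h ⬝ᵥ q := by
  by_contra hno
  obtain ⟨x, μ, hx, hμ, hAx, hGx, hcx⟩ := exists_primal_certificate_of_not_exists_dual_ge hno
  rcases hμ.eq_or_lt with hμ0 | hμ0
  · rw [← hμ0, zero_smul] at hAx hGx
    rw [← hμ0, zero_mul] at hcx
    exact (hrec x hAx hGx hx).not_gt hcx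
  · have hfeas : b ≤ A *ᵥ (μ⁻¹ • x) := by
      rw [mulVec_smul, ← inv_smul_smul₀ hμ0.ne' b]
      exact smul_le_smul_of_nonneg_left hAx (inv_nonneg.2 hμ)
    have hGx' : G *ᵥ (μ⁻¹ • x) = h := by rw [mulVec_smul, hGx, inv_smul_smul₀ hμ0.ne']
    have := hV _ hfeas hGx' (smul_nonneg (inv_nonneg.2 hμ) hx)
    rw [dotProduct_smul, smul_eq_mul, le_inv_mul_iff₀ hμ0] at this
    linarith

section PartitionLP

variable {m n E : ℕ}

def groupMatrix (grp : Fin E → Fin n) : Matrix (Fin n) (Fin E) ℝ :=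
  Matrix.of fun i j => if grp j = i then 1 else 0

variable {A : Matrix (Fin m) (Fin E) ℝ} {b : Fin m → ℝ} {c : Fin E → ℝ} {grp : Fin E → Fin n}

lemma groupMatrix_mulVec (x : Fin E → ℝ) (i : Fin n) :
    (groupMatrix grp *ᵥ x) i = ∑ j, if grp j = i then x j else 0 := by
  simp [groupMatrix, mulVec, dotProduct]

lemma vecMul_groupMatrix (uv : Fin n → ℝ) (j : Fin E) : (uv ᵥ* groupMatrix grp) j = uv (grp j) := by
  simp [groupMatrix, vecMul, dotProduct]

lemma feas_iff_mulVec {x : Fin E → ℝ} :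
    Feas A b grp x ↔ b ≤ A *ᵥ x ∧ groupMatrix grp *ᵥ x = 1 ∧ 0 ≤ x := by
  simp [Feas, funext_iff, groupMatrix_mulVec]

lemma eq_zero_of_groupMatrix_mulVec_eq_zero {x : Fin E → ℝ} (hx : 0 ≤ x)
    (h : groupMatrix grp *ᵥ x = 0) : x = 0 := by
  funext j
  have hsum := groupMatrix_mulVec x (grp j) ▸ congrFun h (grp j)
  refine le_antisymm ?_ (hx j)
  calc x j = if grp j = grp j then x j else 0 := (if_pos rfl).symm
    _ ≤ ∑ j', if grp j' = grp j then x j' else 0 :=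
      single_le_sum (f := fun j' => if grp j' = grp j then x j' else 0)
        (fun j' _ => by split_ifs; exacts [hx j', le_rfl]) (mem_univ j)
    _ = 0 := hsum

lemma rc_eq_sub_vecMul (uq : Fin m → ℝ) (uv : Fin n → ℝ) :
    rc A c grp uq uv = c - uq ᵥ* A - uv ᵥ* groupMatrix grp := by
  funext j
  rw [Pi.sub_apply, Pi.sub_apply, vecMul_groupMatrix]
  simp [rc, vecMul, dotProduct, mul_comm, sub_right_comm]

lemma dualFeas_iff_rc_nonneg {uq : Fin m → ℝ} {uv : Fin n → ℝ} :
    DualFeas A c grp uq uv ↔ 0 ≤ uq ∧ 0 ≤ rc A c grp uq uv := by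
  simp only [DualFeas, rc, Pi.le_def, Pi.zero_apply, sub_sub, sub_nonneg]

variable (c) in
lemma dualObj_add_rc_dotProduct_le {uq : Fin m → ℝ} (uv : Fin n → ℝ) {x : Fin E → ℝ}
    (hx : Feas A b grp x) (huq : 0 ≤ uq) :
    dualObj b uq uv + rc A c grp uq uv ⬝ᵥ x ≤ c ⬝ᵥ x := by
  obtain ⟨hAx, hGx, -⟩ := feas_iff_mulVec.1 hx
  have hc : c = rc A c grp uq uv + uq ᵥ* A + uv ᵥ* groupMatrix grp := by
    rw [rc_eq_sub_vecMul]; abel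
  have hb : b ⬝ᵥ uq ≤ uq ⬝ᵥ (A *ᵥ x) :=
    dotProduct_comm b uq ▸ dotProduct_le_dotProduct_of_nonneg_left hAx huq
  conv_rhs => rw [hc]
  rw [add_dotProduct, add_dotProduct, ← dotProduct_mulVec, ← dotProduct_mulVec, hGx,
    dotProduct_one, dualObj]
  linarith

lemma rc_le_rc_dotProduct {uq : Fin m → ℝ} {uv : Fin n → ℝ} {x : Fin E → ℝ}
    (hu : DualFeas A c grp uq uv) (hx : Feas A b grp x) {j : Fin E} (hj : x j = 1) :
    rc A c grp uq uv j ≤ rc A c grp uq uv ⬝ᵥ x := by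
  have hrc := (dualFeas_iff_rc_nonneg.1 hu).2
  calc rc A c grp uq uv j = rc A c grp uq uv j * x j := by rw [hj, mul_one]
    _ ≤ _ := single_le_sum (f := fun j => rc A c grp uq uv j * x j)
      (fun j _ => mul_nonneg (hrc j) (hx.2.2 j)) (mem_univ j)

lemma dualObj_add_mul_sum_rc_le {zstar θ : ℝ} {I : Finset (Fin E)} {R : Fin E → ℝ}
    (hz : ∃ x, Feas A b grp x ∧ c ⬝ᵥ x = zstar)
    (hR : ∀ j ∈ I, ∃ x, Feas A b grp x ∧ x j = 1 ∧ c ⬝ᵥ x = zstar + R j)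
    (hθ : 0 ≤ θ) (hθI : θ * #I ≤ 1) {uq : Fin m → ℝ} {uv : Fin n → ℝ}
    (hu : DualFeas A c grp uq uv) :
    dualObj b uq uv + θ * ∑ j ∈ I, rc A c grp uq uv j ≤ zstar + θ * ∑ j ∈ I, R j := by
  have hw : dualObj b uq uv ≤ zstar := by
    obtain ⟨x, hx, rfl⟩ := hz
    have := dotProduct_nonneg_of_nonneg (dualFeas_iff_rc_nonneg.1 hu).2 hx.2.2
    linarith [dualObj_add_rc_dotProduct_le c uv hx hu.1]
  have hwj : ∀ j ∈ I, dualObj b uq uv + rc A c grp uq uv j ≤ zstar + R j := by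
    intro j hj
    obtain ⟨x, hx, hxj, hcx⟩ := hR j hj
    linarith [dualObj_add_rc_dotProduct_le c uv hx hu.1, rc_le_rc_dotProduct hu hx hxj]
  have hsum := sum_le_sum hwj
  rw [sum_add_distrib, sum_add_distrib, sum_const, sum_const, nsmul_eq_mul, nsmul_eq_mul] at hsum
  linarith [mul_le_mul_of_nonneg_left hsum hθ, mul_le_mul_of_nonneg_left hw (sub_nonneg.2 hθI)]

lemma add_sum_mul_le_dotProduct_of_integral {zstar : ℝ} {I : Finset (Fin E)} {R : Fin E → ℝ}
    (hz : zstar ∈ lowerBounds {z | ∃ x, Feas A b grp x ∧ c ⬝ᵥ x = z})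
    (hinc : ∀ x, Feas A b grp x → Integral x → ∀ j ∈ I, ∀ j' ∈ I, x j = 1 → x j' = 1 → j = j')
    (hR : ∀ j ∈ I, zstar + R j ∈ lowerBounds {z | ∃ x, Feas A b grp x ∧ x j = 1 ∧ c ⬝ᵥ x = z})
    {x : Fin E → ℝ} (hx : Feas A b grp x) (hxi : Integral x) :
    zstar + ∑ j ∈ I, R j * x j ≤ c ⬝ᵥ x := by
  by_cases h : ∃ j ∈ I, x j = 1
  · obtain ⟨j, hj, hxj⟩ := h
    have hsum : ∑ k ∈ I, R k * x k = R j := by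
      rw [sum_eq_single_of_mem j hj fun k hk hkj => ?_, hxj, mul_one]
      rcases hxi k with hxk | hxk
      · rw [hxk, mul_zero]
      · exact absurd (hinc x hx hxi k hk j hj hxk hxj) hkj
    rw [hsum]
    exact hR j hj ⟨x, hx, hxj, rfl⟩
  · push Not at h
    have hsum : ∑ k ∈ I, R k * x k = 0 :=
      sum_eq_zero fun k hk => by rw [(hxi k).resolve_right (h k hk), mul_zero]
    rw [hsum, add_zero]
    exact hz ⟨x, hx, rfl⟩

lemma add_mul_sum_le_dotProduct_of_ideal {zstar θ : ℝ} {I : Finset (Fin E)} {R : Fin E → ℝ}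
    (hz : IsLeast {z | ∃ x, Feas A b grp x ∧ c ⬝ᵥ x = z} zstar)
    (hideal : ∀ c' : Fin E → ℝ, (∃ x0 : Fin E → ℝ, Feas A b grp x0) →
      ∃ xt : Fin E → ℝ, Feas A b grp xt ∧ Integral xt ∧
        ∀ y : Fin E → ℝ, Feas A b grp y → c' ⬝ᵥ xt ≤ c' ⬝ᵥ y)
    (hinc : ∀ x, Feas A b grp x → Integral x → ∀ j ∈ I, ∀ j' ∈ I, x j = 1 → x j' = 1 → j = j')
    (hR : ∀ j ∈ I, IsLeast {z | ∃ x, Feas A b grp x ∧ x j = 1 ∧ c ⬝ᵥ x = z} (zstar + R j))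
    {x : Fin E → ℝ} (hx : Feas A b grp x) (hxI : ∀ j ∈ I, θ ≤ x j) :
    zstar + θ * ∑ j ∈ I, R j ≤ c ⬝ᵥ x := by
  set c' : Fin E → ℝ := fun j => c j - if j ∈ I then R j else 0
  have hc' : ∀ y, c' ⬝ᵥ y = c ⬝ᵥ y - ∑ j ∈ I, R j * y j := by
    intro y
    simp [c', dotProduct, sub_mul, sum_sub_distrib, ite_mul, sum_ite_mem]
  have hR0 : ∀ j ∈ I, 0 ≤ R j := by
    intro j hj
    obtain ⟨y, hy, -, hcy⟩ := (hR j hj).1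
    linarith [hz.2 ⟨y, hy, hcy⟩]
  obtain ⟨x₀, hx₀, -⟩ := hz.1
  obtain ⟨xt, hxt, hxti, hopt⟩ := hideal c' ⟨x₀, hx₀⟩
  have hxt_le := add_sum_mul_le_dotProduct_of_integral hz.2 hinc (fun j hj => (hR j hj).2) hxt hxti
  have hRθ : θ * ∑ j ∈ I, R j ≤ ∑ j ∈ I, R j * x j := by
    rw [mul_sum]
    exact sum_le_sum fun j hj => by
      rw [mul_comm]; exact mul_le_mul_of_nonneg_left (hxI j hj) (hR0 j hj)
  have := hopt x hx
  rw [hc', hc'] at this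
  linarith

lemma exists_dualFeas_le_dualObj_add_mul_sum_rc {θ V : ℝ} {I : Finset (Fin E)} (hθ : 0 ≤ θ)
    (hV : ∀ x, Feas A b grp x → (∀ j ∈ I, θ ≤ x j) → V ≤ c ⬝ᵥ x) :
    ∃ uq uv, DualFeas A c grp uq uv ∧ V ≤ dualObj b uq uv + θ * ∑ j ∈ I, rc A c grp uq uv j := by
  -- The merged primal appends the rows `lb ≤ x` to `b ≤ A *ᵥ x`; their dual variables `s` are
  -- slacks bounded by the reduced costs.
  set A' : Matrix (Fin m ⊕ Fin E) (Fin E) ℝ := A.fromRows 1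
  set lb : Fin E → ℝ := fun j => if j ∈ I then θ else 0
  have hV' : ∀ x, Sum.elim b lb ≤ A' *ᵥ x → groupMatrix grp *ᵥ x = 1 → 0 ≤ x → V ≤ c ⬝ᵥ x := by
    intro x hx hGx hx0
    rw [fromRows_mulVec, one_mulVec, Sum.elim_le_elim_iff] at hx
    exact hV x (feas_iff_mulVec.2 ⟨hx.1, hGx, hx0⟩) fun j hj => by simpa [lb, hj] using hx.2 j
  have hrec : ∀ x, 0 ≤ A' *ᵥ x → groupMatrix grp *ᵥ x = 0 → 0 ≤ x → 0 ≤ c ⬝ᵥ x := by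
    intro x _ hGx hx0
    rw [eq_zero_of_groupMatrix_mulVec_eq_zero hx0 hGx, dotProduct_zero]
  obtain ⟨p, uv, hp, hdual, hval⟩ := exists_dual_ge_of_forall_le _ _ _ _ _ _ hV' hrec
  set uq := p ∘ Sum.inl
  set s := p ∘ Sum.inr
  rw [vecMul_fromRows, vecMul_one] at hdual
  have hs : s ≤ rc A c grp uq uv := by
    intro j
    have := hdual j
    rw [rc_eq_sub_vecMul]
    simp only [Pi.add_apply, Pi.sub_apply] at this ⊢
    linarith
  have hs0 : 0 ≤ s := fun j => hp _
  refine ⟨uq, uv, dualFeas_iff_rc_nonneg.2 ⟨fun k => hp _, hs0.trans hs⟩, ?_⟩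
  have hb : Sum.elim b lb ⬝ᵥ p = b ⬝ᵥ uq + θ * ∑ j ∈ I, s j := by
    simp [dotProduct, Fintype.sum_sum_type, lb, ite_mul, sum_ite_mem, mul_sum, uq, s]
  rw [hb, one_dotProduct] at hval
  have : θ * ∑ j ∈ I, s j ≤ θ * ∑ j ∈ I, rc A c grp uq uv j :=
    mul_le_mul_of_nonneg_left (sum_le_sum fun j _ => hs j) hθ
  rw [dualObj]
  linarith

end PartitionLP

theorem stmt15_general {m n E : ℕ} (A : Matrix (Fin m) (Fin E) ℝ) (b : Fin m → ℝ)
    (c : Fin E → ℝ) (grp : Fin E → Fin n) (zstar : ℝ)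
    (hz : IsLeast {z | ∃ x : Fin E → ℝ, Feas A b grp x ∧ c ⬝ᵥ x = z} zstar)
    (hideal : ∀ c' : Fin E → ℝ, (∃ x0 : Fin E → ℝ, Feas A b grp x0) →
      ∃ xt : Fin E → ℝ, Feas A b grp xt ∧ Integral xt ∧
        ∀ y : Fin E → ℝ, Feas A b grp y → c' ⬝ᵥ xt ≤ c' ⬝ᵥ y)
    (I : Finset (Fin E))
    (hinc : ∀ x : Fin E → ℝ, Feas A b grp x → Integral x →
      ∀ j ∈ I, ∀ j' ∈ I, x j = 1 → x j' = 1 → j = j')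
    (R : Fin E → ℝ)
    (hR : ∀ j ∈ I,
      IsLeast {z | ∃ x : Fin E → ℝ, Feas A b grp x ∧ x j = 1 ∧ c ⬝ᵥ x = z}
        (zstar + R j)) :
    IsGreatest
      {w | ∃ (uq : Fin m → ℝ) (uv : Fin n → ℝ), DualFeas A c grp uq uv ∧
        w = dualObj b uq uv + (1 / (I.card : ℝ)) * ∑ kl ∈ I, rc A c grp uq uv kl}
      (zstar + (1 / (I.card : ℝ)) * ∑ kl ∈ I, R kl) := by
  set θ := 1 / (I.card : ℝ)
  have hθ : 0 ≤ θ := by positivity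
  -- `1 / 0 = 0` in `ℝ`, so this also holds for `I = ∅`.
  have hθI : θ * #I ≤ 1 := by
    rcases (Nat.cast_nonneg (α := ℝ) #I).eq_or_lt with h | h
    · rw [← h, mul_zero]; exact zero_le_one
    · rw [one_div_mul_cancel h.ne']
  have hub : ∀ uq uv, DualFeas A c grp uq uv →
      dualObj b uq uv + θ * ∑ kl ∈ I, rc A c grp uq uv kl ≤ zstar + θ * ∑ kl ∈ I, R kl :=
    fun _ _ => dualObj_add_mul_sum_rc_le hz.1 (fun j hj => (hR j hj).1) hθ hθI
  obtain ⟨uq, uv, hu, hge⟩ := exists_dualFeas_le_dualObj_add_mul_sum_rc hθ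
    fun x hx hxI => add_mul_sum_le_dotProduct_of_ideal hz hideal hinc hR hx hxI
  exact ⟨⟨uq, uv, hu, ((hub uq uv hu).antisymm hge).symm⟩,
    fun w ⟨uq, uv, hu, hw⟩ => hw ▸ hub uq uv hu⟩

/-- Optimal value of the merged-objective dual (D_I): for a nonempty set I of pairwise
incompatible indices, each belonging to a feasible integral solution, the maximum over
dual feasible u of w(u) + (1/|I|)·Σ_{kl∈I} r_{kl}(u) equals
z* + (1/|I|)·Σ_{kl∈I} R_{kl}. -/
theorem stmt15 {m n E : ℕ} (A : Matrix (Fin m) (Fin E) ℝ) (b : Fin m → ℝ)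
    (c : Fin E → ℝ) (grp : Fin E → Fin n) (zstar : ℝ)
    (hz : IsLeast {z | ∃ x : Fin E → ℝ, Feas A b grp x ∧ c ⬝ᵥ x = z} zstar)
    (hideal : ∀ c' : Fin E → ℝ, (∃ x0 : Fin E → ℝ, Feas A b grp x0) →
      ∃ xt : Fin E → ℝ, Feas A b grp xt ∧ Integral xt ∧
        ∀ y : Fin E → ℝ, Feas A b grp y → c' ⬝ᵥ xt ≤ c' ⬝ᵥ y)
    (I : Finset (Fin E)) (hI : I.Nonempty)
    (hinc : ∀ x : Fin E → ℝ, Feas A b grp x → Integral x →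
      ∀ j ∈ I, ∀ j' ∈ I, x j = 1 → x j' = 1 → j = j')
    (hmem : ∀ j ∈ I, ∃ x : Fin E → ℝ, Feas A b grp x ∧ Integral x ∧ x j = 1)
    (R : Fin E → ℝ)
    (hR : ∀ j ∈ I,
      IsLeast {z | ∃ x : Fin E → ℝ, Feas A b grp x ∧ x j = 1 ∧ c ⬝ᵥ x = z}
        (zstar + R j)) :
    IsGreatest
      {w | ∃ (uq : Fin m → ℝ) (uv : Fin n → ℝ), DualFeas A c grp uq uv ∧
        w = dualObj b uq uv + (1 / (I.card : ℝ)) * ∑ kl ∈ I, rc A c grp uq uv kl}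
      (zstar + (1 / (I.card : ℝ)) * ∑ kl ∈ I, R kl) :=
  stmt15_general A b c grp zstar hz hideal I hinc R hR
end
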